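/- Under the stated hypotheses, the sequence Λ_m converges uniformly on every bounded interval [T, B] as m → ∞, and the limit Λ : [T, ∞) → [0, ∞) is continuous and satisfies g(Φ(t) + Λ(t)) = Φ(t+1) + Λ(t+1) for all t ≥ T. -/

import Mathlib

/-!
The map `Λ ↦ A (Φ (· + 1) + Λ (· + 1)) - Φ` is monotone, so `Λ_m` increases with `m`; and since
`A' ≤ 1/s ≤ 1/λ` on the arguments `Φ(t+1) + Λ_m(t+1) ≥ λ`, it shrinks increments:
`Λ_{m+2}(t) - Λ_{m+1}(t) ≤ (Λ_{m+1}(t+1) - Λ_m(t+1)) / λ`. The growth `g(x+t) ≥ eᵗ g(x)` gives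
`0 ≤ Λ_1(t) ≤ t`, so the `m`-th increment is at most `(t+m)/λ^m`, summable uniformly for `t ≤ B`.
The limit is continuous as a locally uniform limit, and the recursion passes to the limit because
`A` is continuous.
-/

open Filter

/-- The correction terms `Λ_m` built from `A` (the inverse of `g`) and the
auxiliary function `Φ`: `Λ_0 = 0` and `Λ_{m+1}(t) = A(Φ(t+1) + Λ_m(t+1)) − Φ(t)`. -/
noncomputable def LamSeq (A Φ : ℝ → ℝ) : ℕ → ℝ → ℝ
  | 0 => fun _ => 0
  | m + 1 => fun t => A (Φ (t + 1) + LamSeq A Φ m (t + 1)) - Φ t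

open Set Topology

theorem image_sub_le_div_of_deriv_le_inv {f : ℝ → ℝ} {a b : ℝ} (ha : 0 < a) (hab : a ≤ b)
    (hf : ∀ x ∈ Icc a b, DifferentiableAt ℝ f x) (hf' : ∀ x ∈ Icc a b, deriv f x ≤ 1 / x) :
    f b - f a ≤ (b - a) / a := by
  have hfd : DifferentiableOn ℝ f (Icc a b) := fun x hx => (hf x hx).differentiableWithinAt
  have hf'a : ∀ x ∈ interior (Icc a b), deriv f x ≤ 1 / a := fun x hx =>
    (hf' x (interior_subset hx)).trans (one_div_le_one_div_of_le ha (interior_subset hx).1)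
  have := (convex_Icc a b).image_sub_le_mul_sub_of_deriv_le hfd.continuousOn
    (hfd.mono interior_subset) hf'a a (left_mem_Icc.2 hab) b (right_mem_Icc.2 hab) hab
  rwa [one_div_mul_eq_div] at this

theorem StrictMono.monotoneOn_of_rightInvOn {g A : ℝ → ℝ} {S : Set ℝ} (hg : StrictMono g)
    (hA : RightInvOn A g S) : MonotoneOn A S := fun s hs s' hs' h =>
  hg.le_iff_le.1 (by rwa [hA hs, hA hs'])

theorem continuousOn_Ici_of_tendstoUniformlyOn_Icc {ι β : Type*} [UniformSpace β]
    {l : Filter ι} [l.NeBot] {F : ι → ℝ → β} {f : ℝ → β} {T : ℝ}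
    (hF : ∀ i, ContinuousOn (F i) (Ici T)) (hFf : ∀ B, TendstoUniformlyOn F f l (Icc T B)) :
    ContinuousOn f (Ici T) := by
  refine (tendstoLocallyUniformlyOn_of_forall_exists_nhds fun x _ =>
    ⟨Icc T (x + 1), ?_, hFf _⟩).continuousOn (.of_forall hF)
  rw [← Ici_inter_Iic]
  exact inter_mem_nhdsWithin _ (Iic_mem_nhds (by linarith))

theorem tendstoUniformlyOn_tsum_sub_of_norm_le {α E : Type*} [NormedAddCommGroup E]
    [CompleteSpace E] {F : ℕ → α → E} (hF₀ : ∀ x, F 0 x = 0) {u : ℕ → ℝ} (hu : Summable u)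
    {s : Set α} (hFu : ∀ n, ∀ x ∈ s, ‖F (n + 1) x - F n x‖ ≤ u n) :
    TendstoUniformlyOn F (fun x => ∑' n, (F (n + 1) x - F n x)) atTop s := by
  convert tendstoUniformlyOn_tsum_nat hu hFu using 1
  funext N x
  rw [Finset.sum_range_sub (F · x), hF₀, sub_zero]

theorem tendstoUniformlyOn_Icc_of_abs_sub_le_div_pow {F : ℕ → ℝ → ℝ} (hF₀ : ∀ x, F 0 x = 0)
    {T lam : ℝ} (hlam : 1 < lam)
    (hF : ∀ n t, T ≤ t → |F (n + 1) t - F n t| ≤ (t + n) / lam ^ n) (B : ℝ) :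
    TendstoUniformlyOn F (fun t => ∑' n, (F (n + 1) t - F n t)) atTop (Icc T B) := by
  have hr : ‖lam⁻¹‖ < 1 := by
    rw [norm_inv, Real.norm_of_nonneg (by linarith)]
    exact inv_lt_one_of_one_lt₀ hlam
  have hsum : Summable fun n : ℕ => (|B| + n) * lam⁻¹ ^ n := by
    simp_rw [add_mul]
    exact ((summable_geometric_of_norm_lt_one hr).mul_left _).add
      (by simpa using summable_pow_mul_geometric_of_norm_lt_one 1 hr)
  refine tendstoUniformlyOn_tsum_sub_of_norm_le hF₀ hsum fun n t ht => ?_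
  calc ‖F (n + 1) t - F n t‖ ≤ (t + n) / lam ^ n := hF n t ht.1
    _ ≤ (|B| + n) / lam ^ n := by gcongr; exact ht.2.trans (le_abs_self B)
    _ = (|B| + n) * lam⁻¹ ^ n := by rw [inv_pow, div_eq_mul_inv]

theorem LamSeq_succ_apply (A Φ : ℝ → ℝ) (m : ℕ) (t : ℝ) :
    LamSeq A Φ (m + 1) t = A (Φ (t + 1) + LamSeq A Φ m (t + 1)) - Φ t :=
  rfl

section LamSeq

variable {A Φ : ℝ → ℝ} {γ T lam : ℝ}

theorem LamSeq_one_mem_Icc {g : ℝ → ℝ} (hγ : 0 ≤ γ) (hg : ∀ x, γ < g x)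
    (hg_grow : ∀ x u : ℝ, 0 ≤ u → Real.exp u * g x ≤ g (x + u))
    (hA : MonotoneOn A (Ioi γ)) (hA_left : ∀ x, A (g x) = x) {t : ℝ} (ht : 0 ≤ t)
    (hΦ : Φ (t + 1) = Real.exp t * g (Φ t)) : LamSeq A Φ 1 t ∈ Icc 0 t := by
  have hle : g (Φ t) ≤ Φ (t + 1) :=
    hΦ ▸ le_mul_of_one_le_left (hγ.trans (hg _).le) (Real.one_le_exp ht)
  have hlo : Φ t ≤ A (Φ (t + 1)) := by
    simpa only [hA_left] using hA (hg (Φ t)) ((hg _).trans_le hle) hle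
  have hup : A (Φ (t + 1)) ≤ Φ t + t := by
    simpa only [hA_left] using hA ((hg _).trans_le hle) (hg _) (hΦ ▸ hg_grow _ _ ht)
  rw [LamSeq_succ_apply, LamSeq, add_zero, mem_Icc]
  constructor <;> linarith

theorem LamSeq_nonneg_and_le_succ (hA : MonotoneOn A (Ioi γ)) (hΦ : ∀ t, T ≤ t → γ < Φ (t + 1))
    (h₁ : ∀ t, T ≤ t → 0 ≤ LamSeq A Φ 1 t) (m : ℕ) {t : ℝ} (ht : T ≤ t) :
    0 ≤ LamSeq A Φ m t ∧ LamSeq A Φ m t ≤ LamSeq A Φ (m + 1) t := by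
  induction m generalizing t with
  | zero => exact ⟨le_rfl, h₁ t ht⟩
  | succ m ih =>
    obtain ⟨h₀, hle⟩ := ih (t := t + 1) (by linarith)
    have hγ : γ < Φ (t + 1) + LamSeq A Φ m (t + 1) := lt_add_of_lt_of_nonneg (hΦ t ht) h₀
    refine ⟨(ih ht).1.trans (ih ht).2, ?_⟩
    rw [LamSeq_succ_apply, LamSeq_succ_apply A Φ (m + 1)]
    exact sub_le_sub_right (hA hγ (hγ.trans_le (by linarith)) (by linarith)) _

theorem LamSeq_succ_sub_le (hA : MonotoneOn A (Ioi γ))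
    (hA_lip : ∀ a b, γ < a → 0 < a → a ≤ b → A b - A a ≤ (b - a) / a) (hlam : 0 < lam)
    (hΦγ : ∀ t, T ≤ t → γ < Φ (t + 1)) (hΦlam : ∀ t, T ≤ t → lam ≤ Φ t)
    (h₁ : ∀ t, T ≤ t → 0 ≤ LamSeq A Φ 1 t) (m : ℕ) {t : ℝ} (ht : T ≤ t) :
    LamSeq A Φ (m + 1) t - LamSeq A Φ m t ≤ LamSeq A Φ 1 (t + m) / lam ^ m := by
  induction m generalizing t with
  | zero => simp [LamSeq]
  | succ m ih =>
    have ht₁ : T ≤ t + 1 := by linarith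
    obtain ⟨h₀, hle⟩ := LamSeq_nonneg_and_le_succ hA hΦγ h₁ m ht₁
    set d := LamSeq A Φ (m + 1) (t + 1) - LamSeq A Φ m (t + 1)
    set a := Φ (t + 1) + LamSeq A Φ m (t + 1)
    have hlam_a : lam ≤ a := le_add_of_le_of_nonneg (hΦlam _ ht₁) h₀
    have had : a + d = Φ (t + 1) + LamSeq A Φ (m + 1) (t + 1) := by ring
    calc LamSeq A Φ (m + 1 + 1) t - LamSeq A Φ (m + 1) t = A (a + d) - A a := by
          rw [had]; exact sub_sub_sub_cancel_right _ _ _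
      _ ≤ d / a := by
          simpa using hA_lip a (a + d) (lt_add_of_lt_of_nonneg (hΦγ t ht) h₀)
            (hlam.trans_le hlam_a) (by simpa [d] using hle)
      _ ≤ d / lam := div_le_div_of_nonneg_left (sub_nonneg.2 hle) hlam hlam_a
      _ ≤ LamSeq A Φ 1 (t + 1 + m) / lam ^ m / lam := by gcongr; exact ih ht₁
      _ = LamSeq A Φ 1 (t + ↑(m + 1)) / lam ^ (m + 1) := by
          rw [div_div, ← pow_succ, Nat.cast_succ, add_comm (m : ℝ) 1, add_assoc]

theorem abs_LamSeq_succ_sub_le (hA : MonotoneOn A (Ioi γ))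
    (hA_lip : ∀ a b, γ < a → 0 < a → a ≤ b → A b - A a ≤ (b - a) / a) (hlam : 0 < lam)
    (hΦγ : ∀ t, T ≤ t → γ < Φ (t + 1)) (hΦlam : ∀ t, T ≤ t → lam ≤ Φ t)
    (h₁ : ∀ t, T ≤ t → LamSeq A Φ 1 t ∈ Icc 0 t) (m : ℕ) (t : ℝ) (ht : T ≤ t) :
    |LamSeq A Φ (m + 1) t - LamSeq A Φ m t| ≤ (t + m) / lam ^ m := by
  have h₁' := fun t ht => (h₁ t ht).1
  rw [abs_of_nonneg (sub_nonneg.2 (LamSeq_nonneg_and_le_succ hA hΦγ h₁' m ht).2)]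
  refine (LamSeq_succ_sub_le hA hA_lip hlam hΦγ hΦlam h₁' m ht).trans ?_
  gcongr
  exact (h₁ _ (by linarith [m.cast_nonneg (α := ℝ)])).2

theorem continuousOn_LamSeq (hA : ∀ s, γ < s → ContinuousAt A s) (hΦ : ContinuousOn Φ (Ici T))
    (hΦγ : ∀ t, T ≤ t → γ < Φ (t + 1)) (hnonneg : ∀ m t, T ≤ t → 0 ≤ LamSeq A Φ m t) (m : ℕ) :
    ContinuousOn (LamSeq A Φ m) (Ici T) := by
  induction m with
  | zero => exact continuousOn_const
  | succ m ih =>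
    have hshift : MapsTo (· + 1) (Ici T) (Ici T) := fun t ht => by
      simp only [mem_Ici] at *; linarith
    have hcont : ContinuousOn (fun t => Φ (t + 1) + LamSeq A Φ m (t + 1)) (Ici T) :=
      (hΦ.comp (by fun_prop) hshift).add (ih.comp (by fun_prop) hshift)
    refine ContinuousOn.sub (fun t (ht : T ≤ t) => ?_) hΦ
    have hγ : γ < Φ (t + 1) + LamSeq A Φ m (t + 1) :=
      lt_add_of_lt_of_nonneg (hΦγ t ht) (hnonneg m _ (by linarith))
    exact ContinuousAt.comp_continuousWithinAt (f := fun t => Φ (t + 1) + LamSeq A Φ m (t + 1))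
      (hA _ hγ) (hcont t ht)

theorem eq_of_tendsto_LamSeq {Λ : ℝ → ℝ} {t : ℝ}
    (ht : Tendsto (fun m => LamSeq A Φ m t) atTop (𝓝 (Λ t)))
    (ht₁ : Tendsto (fun m => LamSeq A Φ m (t + 1)) atTop (𝓝 (Λ (t + 1))))
    (hA : ContinuousAt A (Φ (t + 1) + Λ (t + 1))) :
    Λ t = A (Φ (t + 1) + Λ (t + 1)) - Φ t :=
  tendsto_nhds_unique ((tendsto_add_atTop_iff_nat 1).2 ht)
    ((hA.tendsto.comp (tendsto_const_nhds.add ht₁)).sub tendsto_const_nhds)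

end LamSeq

theorem LamSeq_tendstoUniformly_exists_Lambda_general
    (γ : ℝ) (hγ : 0 ≤ γ)
    (g : ℝ → ℝ) (hg_mono : StrictMono g)
    (hg_range : Set.range g = Set.Ioi γ)
    (hg_grow : ∀ x u : ℝ, 0 ≤ u → Real.exp u * g x ≤ g (x + u))
    (A : ℝ → ℝ)
    (hA_left : ∀ x : ℝ, A (g x) = x)
    (hA_right : ∀ s : ℝ, γ < s → g (A s) = s)
    (hA_diff : ∀ s : ℝ, γ < s → DifferentiableAt ℝ A s)
    (hA_deriv : ∀ s : ℝ, γ < s → 0 < deriv A s ∧ deriv A s ≤ 1 / s)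
    (T : ℝ) (hT : 0 < T) (lam : ℝ) (hlam : 1 < lam)
    (Φ : ℝ → ℝ) (hΦcont : ContinuousOn Φ (Set.Ici T))
    (hΦeq : ∀ t : ℝ, T ≤ t → Φ (t + 1) = Real.exp t * g (Φ t))
    (hΦlam : ∀ t : ℝ, T ≤ t → lam ≤ Φ t) :
    ∃ Λ : ℝ → ℝ,
      (∀ B : ℝ, TendstoUniformlyOn (fun m t => LamSeq A Φ m t) Λ atTop
        (Set.Icc T B)) ∧
      ContinuousOn Λ (Set.Ici T) ∧
      (∀ t : ℝ, T ≤ t → 0 ≤ Λ t) ∧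
      (∀ t : ℝ, T ≤ t → g (Φ t + Λ t) = Φ (t + 1) + Λ (t + 1)) := by
  have hg_gt : ∀ x, γ < g x := fun x => by
    simpa [hg_range] using mem_range_self (f := g) x
  have hA_mono : MonotoneOn A (Ioi γ) := hg_mono.monotoneOn_of_rightInvOn hA_right
  have hA_lip : ∀ a b, γ < a → 0 < a → a ≤ b → A b - A a ≤ (b - a) / a := fun a b hγa ha hab =>
    image_sub_le_div_of_deriv_le_inv ha hab (fun x hx => hA_diff x (hγa.trans_le hx.1))
      fun x hx => (hA_deriv x (hγa.trans_le hx.1)).2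
  have hA_cont : ∀ s, γ < s → ContinuousAt A s := fun s hs => (hA_diff s hs).continuousAt
  have hΦγ : ∀ t, T ≤ t → γ < Φ (t + 1) := fun t ht => by
    rw [hΦeq t ht]
    exact (hg_gt _).trans_le
      (le_mul_of_one_le_left (hγ.trans (hg_gt _).le) (Real.one_le_exp (by linarith)))
  have hΛ₁ : ∀ t, T ≤ t → LamSeq A Φ 1 t ∈ Icc 0 t := fun t ht =>
    LamSeq_one_mem_Icc hγ hg_gt hg_grow hA_mono hA_left (hT.le.trans ht) (hΦeq t ht)
  have hmono := fun m t (ht : T ≤ t) =>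
    LamSeq_nonneg_and_le_succ hA_mono hΦγ (fun t ht => (hΛ₁ t ht).1) m ht
  set Λ := fun t => ∑' m, (LamSeq A Φ (m + 1) t - LamSeq A Φ m t)
  have hU : ∀ B, TendstoUniformlyOn (fun m t => LamSeq A Φ m t) Λ atTop (Icc T B) :=
    tendstoUniformlyOn_Icc_of_abs_sub_le_div_pow (fun _ => rfl) hlam
      (abs_LamSeq_succ_sub_le hA_mono hA_lip (by linarith) hΦγ hΦlam hΛ₁)
  have hlim : ∀ t, T ≤ t → Tendsto (fun m => LamSeq A Φ m t) atTop (𝓝 (Λ t)) := fun t ht =>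
    (hU t).tendsto_at ⟨ht, le_rfl⟩
  have hnonneg : ∀ t, T ≤ t → 0 ≤ Λ t := fun t ht =>
    ge_of_tendsto' (hlim t ht) fun m => (hmono m t ht).1
  refine ⟨Λ, hU, continuousOn_Ici_of_tendstoUniformlyOn_Icc
    (continuousOn_LamSeq hA_cont hΦcont hΦγ fun m t ht => (hmono m t ht).1) hU,
    hnonneg, fun t ht => ?_⟩
  have hs : γ < Φ (t + 1) + Λ (t + 1) :=
    lt_add_of_lt_of_nonneg (hΦγ t ht) (hnonneg _ (by linarith))
  rw [eq_of_tendsto_LamSeq (hlim t ht) (hlim _ (by linarith)) (hA_cont _ hs), add_sub_cancel,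
    hA_right _ hs]

theorem LamSeq_tendstoUniformly_exists_Lambda
    (γ : ℝ) (hγ : 0 ≤ γ)
    (g : ℝ → ℝ) (hg_mono : StrictMono g) (hg_diff : Differentiable ℝ g)
    (hg_range : Set.range g = Set.Ioi γ)
    (hg_grow : ∀ x u : ℝ, 0 ≤ u → Real.exp u * g x ≤ g (x + u))
    (A : ℝ → ℝ)
    (hA_left : ∀ x : ℝ, A (g x) = x)
    (hA_right : ∀ s : ℝ, γ < s → g (A s) = s)
    (hA_diff : ∀ s : ℝ, γ < s → DifferentiableAt ℝ A s)
    (hA_deriv : ∀ s : ℝ, γ < s → 0 < deriv A s ∧ deriv A s ≤ 1 / s)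
    (T : ℝ) (hT : 0 < T) (lam : ℝ) (hlam : 1 < lam)
    (Φ : ℝ → ℝ) (hΦcont : ContinuousOn Φ (Set.Ici T))
    (hΦeq : ∀ t : ℝ, T ≤ t → Φ (t + 1) = Real.exp t * g (Φ t))
    (hΦlam : ∀ t : ℝ, T ≤ t → lam ≤ Φ t) :
    ∃ Λ : ℝ → ℝ,
      (∀ B : ℝ, TendstoUniformlyOn (fun m t => LamSeq A Φ m t) Λ atTop
        (Set.Icc T B)) ∧
      ContinuousOn Λ (Set.Ici T) ∧
      (∀ t : ℝ, T ≤ t → 0 ≤ Λ t) ∧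
      (∀ t : ℝ, T ≤ t → g (Φ t + Λ t) = Φ (t + 1) + Λ (t + 1)) :=
  LamSeq_tendstoUniformly_exists_Lambda_general γ hγ g hg_mono hg_range hg_grow A hA_left hA_right
    hA_diff hA_deriv T hT lam hlam Φ hΦcont hΦeq hΦlam
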